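/- arXiv:2101.12399 — 5 statements merged into one kernel-verified Lean document; each statement's English description precedes it below -/
import Mathlib

section
/- Let V be a real inner product space with inner product h, and let V, W be vectors with ‖V‖ < 1. Define λ = 1 - ‖V‖². Then the condition √(λ‖W‖² + ⟨V,W⟩²) + ⟨V,W⟩ < λ holds if and only if ‖V + W‖² < 1. -/
/-! Squaring `√(λ‖W‖² + ⟨V,W⟩²) < λ - ⟨V,W⟩` and dividing by `λ > 0` leaves
`‖W‖² + 2⟨V,W⟩ < λ`, which is `‖V + W‖² < 1` after expanding the square. -/

theorem Real.sqrt_mul_add_sq_add_lt_iff {l w s : ℝ} (hl : 0 < l) (hw : 0 ≤ w) :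
    √(l * w + s ^ 2) + s < l ↔ 2 * s + w < l := by
  rw [← lt_sub_iff_add_lt]
  constructor
  · intro h
    have hpos : 0 < l - s := (Real.sqrt_nonneg _).trans_lt h
    have hsq : l * w + s ^ 2 < (l - s) ^ 2 := (Real.sqrt_lt' hpos).mp h
    nlinarith
  · intro h
    have hpos : 0 < l - s := by cases le_total 0 s <;> linarith
    refine (Real.sqrt_lt' hpos).mpr ?_
    nlinarith

/-- Zermelo condition F(-W) < 1 is equivalent to ‖V + W‖² < 1. -/
theorem stmt_0 {E : Type*} [NormedAddCommGroup E] [InnerProductSpace ℝ E]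
    (V W : E) (hV : ‖V‖ < 1) :
    Real.sqrt ((1 - ‖V‖ ^ 2) * ‖W‖ ^ 2 + (inner ℝ V W : ℝ) ^ 2) + (inner ℝ V W : ℝ)
      < 1 - ‖V‖ ^ 2 ↔ ‖V + W‖ ^ 2 < 1 := by
  have hl : 0 < 1 - ‖V‖ ^ 2 := by
    nlinarith [norm_nonneg V]
  rw [Real.sqrt_mul_add_sq_add_lt_iff hl (sq_nonneg ‖W‖), norm_add_sq_real]
  constructor <;> intro h <;> linarith
end

section
/- Let F₁ = α + β be a Randers norm on ℝⁿ (α Riemannian norm from positive definite form a, β linear with |β(v)| < α(v) for v ≠ 0), and W a vector with F₁(-W) < 1. Define η = (1+β(W))² - α(W)² and the symmetric bilinear form ã with ã_{ij} = (a_{ij} - b_i b_j)/η + ((W_i^{(a)} - b_i(1+β(W)))/η)((W_j^{(a)} - b_j(1+β(W)))/η), where W_i^{(a)} = a_{ij}W^j. Then ã is positive definite. -/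
open scoped Matrix

/-!
With `c := η⁻¹ (aW - (1 + β(W)) b)` one has `ã = η⁻¹ (a - b bᵀ) + c cᵀ`, so
`ã(v, v) = (α(v)² - β(v)²) / η + (c ⬝ᵥ v)²`. The Randers condition makes the first numerator
positive, and `α(W) < 1 + β(W)` gives `η = (1 + β(W))² - α(W)² > 0`.
-/

open Matrix

section

variable {ι : Type*} [Fintype ι]

theorem dotProduct_vecMulVec_self_mulVec {R : Type*} [CommRing R] (u v : ι → R) :
    v ⬝ᵥ vecMulVec u u *ᵥ v = (u ⬝ᵥ v) ^ 2 := by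
  rw [vecMulVec_mulVec, op_smul_eq_smul, dotProduct_smul, smul_eq_mul, dotProduct_comm, sq]

def IsRandersPair (a : Matrix ι ι ℝ) (b : ι → ℝ) : Prop :=
  ∀ v : ι → ℝ, v ≠ 0 → |b ⬝ᵥ v| < √(v ⬝ᵥ a *ᵥ v)

namespace IsRandersPair

variable {a : Matrix ι ι ℝ} {b : ι → ℝ}

theorem sq_lt (h : IsRandersPair a b) {v : ι → ℝ} (hv : v ≠ 0) :
    (b ⬝ᵥ v) ^ 2 < v ⬝ᵥ a *ᵥ v :=
  sq_abs (b ⬝ᵥ v) ▸ (Real.lt_sqrt (abs_nonneg _)).1 (h v hv)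

theorem dotProduct_mulVec_nonneg (h : IsRandersPair a b) (v : ι → ℝ) :
    0 ≤ v ⬝ᵥ a *ᵥ v := by
  rcases eq_or_ne v 0 with rfl | hv
  · simp
  · exact (sq_nonneg _).trans (h.sq_lt hv).le

theorem sq_one_add_sub_pos (h : IsRandersPair a b) {W : ι → ℝ}
    (hW : √(W ⬝ᵥ a *ᵥ W) - b ⬝ᵥ W < 1) :
    0 < (1 + b ⬝ᵥ W) ^ 2 - W ⬝ᵥ a *ᵥ W := by
  have hα : √(W ⬝ᵥ a *ᵥ W) < 1 + b ⬝ᵥ W := by linarith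
  rw [sub_pos, ← Real.sq_sqrt (h.dotProduct_mulVec_nonneg W)]
  exact pow_lt_pow_left₀ hα (Real.sqrt_nonneg _) two_ne_zero

end IsRandersPair

end

theorem stmt_3_general {n : ℕ} (a : Matrix (Fin n) (Fin n) ℝ)
    (b W : Fin n → ℝ)
    (hRanders : ∀ v : Fin n → ℝ, v ≠ 0 → |b ⬝ᵥ v| < Real.sqrt (v ⬝ᵥ a.mulVec v))
    (hW : Real.sqrt (W ⬝ᵥ a.mulVec W) - b ⬝ᵥ W < 1)
    (η : ℝ) (hη : η = (1 + b ⬝ᵥ W) ^ 2 - W ⬝ᵥ a.mulVec W)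
    (atil : Matrix (Fin n) (Fin n) ℝ)
    (hatil : ∀ i j, atil i j = (a i j - b i * b j) / η +
        ((a.mulVec W i - b i * (1 + b ⬝ᵥ W)) / η) *
        ((a.mulVec W j - b j * (1 + b ⬝ᵥ W)) / η)) :
    ∀ v : Fin n → ℝ, v ≠ 0 → 0 < v ⬝ᵥ atil.mulVec v := by
  intro v hv
  have hab : IsRandersPair a b := hRanders
  have hη_pos : 0 < η := hη ▸ hab.sq_one_add_sub_pos hW
  set c := η⁻¹ • (a *ᵥ W - (1 + b ⬝ᵥ W) • b)
  have hatil_eq : atil = η⁻¹ • (a - vecMulVec b b) + vecMulVec c c := by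
    ext i j
    simp only [hatil, c, Matrix.add_apply, Matrix.smul_apply, Matrix.sub_apply, vecMulVec_apply,
      Pi.smul_apply, Pi.sub_apply, smul_eq_mul]
    ring
  have hquad : v ⬝ᵥ atil *ᵥ v = η⁻¹ * (v ⬝ᵥ a *ᵥ v - (b ⬝ᵥ v) ^ 2) + (c ⬝ᵥ v) ^ 2 := by
    rw [hatil_eq, add_mulVec, dotProduct_add, smul_mulVec, dotProduct_smul, sub_mulVec,
      dotProduct_sub, dotProduct_vecMulVec_self_mulVec, dotProduct_vecMulVec_self_mulVec,
      smul_eq_mul]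
  rw [hquad]
  exact add_pos_of_pos_of_nonneg (mul_pos (inv_pos.2 hη_pos) (sub_pos.2 (hab.sq_lt hv)))
    (sq_nonneg _)

/-- The bilinear form ã of the Zermelo solution with Randers data (α+β, W) is positive
definite. -/
theorem stmt_3 {n : ℕ} (a : Matrix (Fin n) (Fin n) ℝ) (ha : a.PosDef) (hsym : a.IsSymm)
    (b W : Fin n → ℝ)
    (hRanders : ∀ v : Fin n → ℝ, v ≠ 0 → |b ⬝ᵥ v| < Real.sqrt (v ⬝ᵥ a.mulVec v))
    (hW : Real.sqrt (W ⬝ᵥ a.mulVec W) - b ⬝ᵥ W < 1)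
    (η : ℝ) (hη : η = (1 + b ⬝ᵥ W) ^ 2 - W ⬝ᵥ a.mulVec W)
    (atil : Matrix (Fin n) (Fin n) ℝ)
    (hatil : ∀ i j, atil i j = (a i j - b i * b j) / η +
        ((a.mulVec W i - b i * (1 + b ⬝ᵥ W)) / η) *
        ((a.mulVec W j - b j * (1 + b ⬝ᵥ W)) / η)) :
    ∀ v : Fin n → ℝ, v ≠ 0 → 0 < v ⬝ᵥ atil.mulVec v :=
  stmt_3_general a b W hRanders hW η hη atil hatil
end

section
/- Let h be a positive definite symmetric bilinear form on ℝⁿ and W a vector with ‖W‖_h < 1. Define λ = 1 - ‖W‖²_h, a_{ij} = h_{ij}/λ + (W_i/λ)(W_j/λ) with W_i = h_{ij}W^j, and b_i = -W_i/λ. Then for every y ∈ ℝⁿ, the value F(y) = √(a_{ij}y^i y^j) + b_i y^i satisfies the Zermelo navigation equation ‖y - F(y)·W‖_h = F(y) whenever y ≠ 0. -/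
/-!
With `s = ⟪W, y⟫` and `λ = 1 - ‖W‖² > 0`, the number `F y` is the nonnegative root of
`λ t² + 2 s t = ‖y‖²`. Expanding `‖y - t W‖² = ‖y‖² - 2 s t + t² ‖W‖²` and substituting
`‖W‖² = 1 - λ`, this quadratic relation is exactly `‖y - t W‖² = t²`.
-/

namespace Real

variable {l q s : ℝ}

theorem sqrt_div_add_sq_div_sub_div_nonneg (hl : 0 < l) (hq : 0 ≤ q) :
    0 ≤ √(q / l + (s / l) ^ 2) - s / l := by
  rw [sub_nonneg]
  exact le_sqrt_of_sq_le (le_add_of_nonneg_left (by positivity))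

theorem sqrt_div_add_sq_div_sub_div_isRoot (hl : 0 < l) (hq : 0 ≤ q) :
    let t := √(q / l + (s / l) ^ 2) - s / l
    l * t ^ 2 + 2 * s * t = q := by
  intro t
  have hroot : (t + s / l) ^ 2 = q / l + (s / l) ^ 2 := by
    simp only [t, sub_add_cancel]
    exact sq_sqrt (by positivity)
  clear_value t
  field_simp at hroot
  exact mul_left_cancel₀ hl.ne' (by linear_combination hroot)

end Real

theorem norm_sub_smul_eq_self_of_quadratic {E : Type*} [NormedAddCommGroup E]
    [InnerProductSpace ℝ E] {W y : E} {l t : ℝ} (hW : ‖W‖ ^ 2 = 1 - l) (ht : 0 ≤ t)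
    (hroot : l * t ^ 2 + 2 * inner ℝ W y * t = ‖y‖ ^ 2) :
    ‖y - t • W‖ = t := by
  have hsq : ‖y - t • W‖ ^ 2 = t ^ 2 := by
    rw [norm_sub_sq_real, real_inner_smul_right, real_inner_comm, norm_smul, mul_pow,
      Real.norm_eq_abs, sq_abs, hW]
    linear_combination -hroot
  exact (pow_left_inj₀ (norm_nonneg _) ht two_ne_zero).1 hsq

/-- The Randers norm F = α + β from the Zermelo navigation data (h, W)
satisfies the navigation equation ‖y - F(y)·W‖ = F(y). -/
theorem stmt_5 {E : Type*} [NormedAddCommGroup E] [InnerProductSpace ℝ E]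
    (W : E) (hW : ‖W‖ < 1) (lam : ℝ) (hlam : lam = 1 - ‖W‖ ^ 2)
    (F : E → ℝ)
    (hF : ∀ y : E, F y =
      Real.sqrt (‖y‖ ^ 2 / lam + ((inner ℝ W y : ℝ) / lam) ^ 2) - (inner ℝ W y : ℝ) / lam) :
    ∀ y : E, y ≠ 0 → ‖y - F y • W‖ = F y := by
  intro y _
  have hlam_pos : 0 < lam := by nlinarith [norm_nonneg W]
  rw [hF y]
  exact norm_sub_smul_eq_self_of_quadratic (by linarith)
    (Real.sqrt_div_add_sq_div_sub_div_nonneg hlam_pos (sq_nonneg _))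
    (Real.sqrt_div_add_sq_div_sub_div_isRoot hlam_pos (sq_nonneg _))
end

section
/- Two-step Zermelo navigation equals one-step: let h be a positive definite inner product on ℝⁿ and V, W vectors with ‖V+W‖_h < 1. Let F₁ be the Randers norm solving Zermelo navigation for (h, V) (assuming ‖V‖_h < 1), and F̃ the norm solving F₁(y - F̃·W) = F̃ (assuming F₁(-W) < 1). Then F̃ equals the Randers norm solving Zermelo navigation for (h, V+W). -/
open scoped RealInnerProductSpace

/-!
For `‖U‖ < 1`, `zermeloSol U y` is the unique `t` with `‖y - t • U‖ = t`: squaring gives the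
quadratic `(1 - ‖U‖²) t² + 2 ⟪U, y⟫ t = ‖y‖²`, and Cauchy–Schwarz shows that only its larger
root can satisfy the unsquared equation. With this characterization the two-step problem
collapses: `F_V (y - t • W) = t` means `‖y - t • W - t • V‖ = t`, i.e. `‖y - t • (V + W)‖ = t`,
i.e. `t = F_{V+W} y`.
-/

/-- The Randers norm solving the Zermelo navigation problem for data (h, U), ‖U‖ < 1. -/
noncomputable def zermeloSol {E : Type*} [NormedAddCommGroup E] [InnerProductSpace ℝ E]
    (U y : E) : ℝ :=
  (Real.sqrt ((1 - ‖U‖ ^ 2) * ‖y‖ ^ 2 + (inner ℝ U y : ℝ) ^ 2) - (inner ℝ U y : ℝ)) /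
    (1 - ‖U‖ ^ 2)

section Zermelo

variable {E : Type*} [NormedAddCommGroup E] [InnerProductSpace ℝ E] {U : E}

lemma norm_sub_smul_sq (U y : E) (t : ℝ) :
    ‖y - t • U‖ ^ 2 = ‖y‖ ^ 2 - 2 * ⟪U, y⟫ * t + t ^ 2 * ‖U‖ ^ 2 := by
  rw [norm_sub_sq_real, real_inner_smul_right, norm_smul, real_inner_comm, mul_pow,
    Real.norm_eq_abs, sq_abs]
  ring

lemma zermeloSol_nonneg (hU : ‖U‖ < 1) (y : E) : 0 ≤ zermeloSol U y := by
  have hl : 0 < 1 - ‖U‖ ^ 2 := by nlinarith [norm_nonneg U]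
  have hinner : ⟪U, y⟫ ≤ √((1 - ‖U‖ ^ 2) * ‖y‖ ^ 2 + ⟪U, y⟫ ^ 2) :=
    (le_abs_self _).trans <| Real.abs_le_sqrt (by nlinarith [sq_nonneg ‖y‖])
  exact div_nonneg (sub_nonneg.mpr hinner) hl.le

lemma norm_sub_zermeloSol_smul (hU : ‖U‖ < 1) (y : E) :
    ‖y - zermeloSol U y • U‖ = zermeloSol U y := by
  have hl : 0 < 1 - ‖U‖ ^ 2 := by nlinarith [norm_nonneg U]
  set c := ⟪U, y⟫
  set s := √((1 - ‖U‖ ^ 2) * ‖y‖ ^ 2 + c ^ 2)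
  have hs : s ^ 2 = (1 - ‖U‖ ^ 2) * ‖y‖ ^ 2 + c ^ 2 :=
    Real.sq_sqrt (by nlinarith [sq_nonneg ‖y‖, sq_nonneg c])
  set F := zermeloSol U y
  have hF : F * (1 - ‖U‖ ^ 2) = s - c := div_mul_cancel₀ _ hl.ne'
  have hquad : ‖y‖ ^ 2 = (1 - ‖U‖ ^ 2) * F ^ 2 + 2 * c * F := by
    refine mul_left_cancel₀ hl.ne' ?_
    linear_combination -hs - (s + F * (1 - ‖U‖ ^ 2) + c) * hF
  have hsq : ‖y - F • U‖ ^ 2 = F ^ 2 := by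
    rw [norm_sub_smul_sq, hquad]
    ring
  rw [← Real.sqrt_sq (norm_nonneg _), hsq, Real.sqrt_sq (zermeloSol_nonneg hU y)]

lemma eq_zermeloSol_of_norm_sub_smul_eq (hU : ‖U‖ < 1) {y : E} {t : ℝ}
    (h : ‖y - t • U‖ = t) : t = zermeloSol U y := by
  have hl : 0 < 1 - ‖U‖ ^ 2 := by nlinarith [norm_nonneg U]
  have ht : 0 ≤ t := h ▸ norm_nonneg _
  set c := ⟪U, y⟫
  have hquad : (1 - ‖U‖ ^ 2) * t ^ 2 + 2 * c * t = ‖y‖ ^ 2 := by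
    have h2 := norm_sub_smul_sq U y t
    rw [h] at h2
    linarith
  -- Cauchy–Schwarz on `⟪U, y - t • U⟫ = c - t ‖U‖²` selects the larger root.
  have hlarger : 0 ≤ (1 - ‖U‖ ^ 2) * t + c := by
    have hCS := (neg_abs_le _).trans' (neg_le_neg (abs_real_inner_le_norm U (y - t • U)))
    rw [h, inner_sub_right, real_inner_smul_right, real_inner_self_eq_norm_sq] at hCS
    nlinarith [norm_nonneg U]
  have hsqrt : √((1 - ‖U‖ ^ 2) * ‖y‖ ^ 2 + c ^ 2) = (1 - ‖U‖ ^ 2) * t + c := by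
    rw [Real.sqrt_eq_iff_eq_sq (by nlinarith [sq_nonneg ‖y‖, sq_nonneg c]) hlarger, ← hquad]
    ring
  rw [zermeloSol, hsqrt]
  field_simp
  ring

lemma zermeloSol_eq_iff (hU : ‖U‖ < 1) {y : E} {t : ℝ} :
    zermeloSol U y = t ↔ ‖y - t • U‖ = t :=
  ⟨fun h ↦ h ▸ norm_sub_zermeloSol_smul hU y,
    fun h ↦ (eq_zermeloSol_of_norm_sub_smul_eq hU h).symm⟩

end Zermelo

theorem stmt_7_general {E : Type*} [NormedAddCommGroup E] [InnerProductSpace ℝ E]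
    (V W : E) (hV : ‖V‖ < 1) (hVW : ‖V + W‖ < 1) :
    ∀ y : E, y ≠ 0 →
      zermeloSol V (y - zermeloSol (V + W) y • W) = zermeloSol (V + W) y ∧
      ∀ t : ℝ, 0 < t → zermeloSol V (y - t • W) = t → t = zermeloSol (V + W) y := by
  have two_step (y : E) (t : ℝ) :
      zermeloSol V (y - t • W) = t ↔ t = zermeloSol (V + W) y := by
    rw [zermeloSol_eq_iff hV, sub_sub, ← smul_add, add_comm W V,
      ← zermeloSol_eq_iff hVW, eq_comm]
  exact fun y _ ↦ ⟨(two_step y _).mpr rfl, fun t _ ↦ (two_step y t).mp⟩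

/-- Two-step Zermelo navigation equals one-step navigation: the Zermelo solution for
(h, V+W) is exactly the (unique positive) solution F̃ of F₁(y - F̃·W) = F̃, where
F₁ is the Zermelo solution for (h, V). -/
theorem stmt_7 {E : Type*} [NormedAddCommGroup E] [InnerProductSpace ℝ E]
    (V W : E) (hV : ‖V‖ < 1) (hVW : ‖V + W‖ < 1)
    (hF1W : zermeloSol V (-W) < 1) :
    ∀ y : E, y ≠ 0 →
      zermeloSol V (y - zermeloSol (V + W) y • W) = zermeloSol (V + W) y ∧
      ∀ t : ℝ, 0 < t → zermeloSol V (y - t • W) = t → t = zermeloSol (V + W) y :=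
  stmt_7_general V W hV hVW
end

section
/- In the two-step Zermelo navigation, the intermediate constants satisfy η = Λ/λ, where λ = 1 - ‖V‖²_h, Λ = 1 - ‖V+W‖²_h, and η = (1 + β(W))² - α²(W), with α, β the data of the Randers solution F₁ = α + β for navigation data (h, V). -/
/-!
Writing `b = ⟪V, W⟫`, the quantity `η = (1 - b/λ)² - ‖W‖²/λ - b²/λ²` collapses, since the `b²/λ²`
terms cancel, to `(λ - ‖W‖² - 2b)/λ`; and `λ - ‖W‖² - 2b = 1 - ‖V + W‖² = Λ` by expanding the square.
-/

lemma sq_one_add_neg_div_sub_div_add_div_sq {lam : ℝ} (hlam : lam ≠ 0) (b w : ℝ) :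
    (1 + -b / lam) ^ 2 - (w / lam + b ^ 2 / lam ^ 2) = (lam - w - 2 * b) / lam := by
  field_simp
  ring

lemma one_sub_norm_add_sq_real {E : Type*} [NormedAddCommGroup E] [InnerProductSpace ℝ E]
    (V W : E) :
    1 - ‖V + W‖ ^ 2 = (1 - ‖V‖ ^ 2) - ‖W‖ ^ 2 - 2 * inner ℝ V W := by
  rw [norm_add_sq_real]
  ring

theorem stmt_8_general {E : Type*} [NormedAddCommGroup E] [InnerProductSpace ℝ E]
    (V W : E) (hV : ‖V‖ < 1)
    (lam Lam alphaW2 betaW eta : ℝ)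
    (hlam : lam = 1 - ‖V‖ ^ 2) (hLam : Lam = 1 - ‖V + W‖ ^ 2)
    (halpha : alphaW2 = ‖W‖ ^ 2 / lam + (inner ℝ V W : ℝ) ^ 2 / lam ^ 2)
    (hbeta : betaW = -(inner ℝ V W : ℝ) / lam)
    (heta : eta = (1 + betaW) ^ 2 - alphaW2) :
    eta = Lam / lam := by
  have hlam_pos : 0 < lam := by
    rw [hlam, sub_pos, sq_lt_one_iff_abs_lt_one, abs_norm]
    exact hV
  rw [heta, hbeta, halpha, sq_one_add_neg_div_sub_div_add_div_sq hlam_pos.ne', hLam,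
    one_sub_norm_add_sq_real, ← hlam]

/-- In two-step Zermelo navigation the constants satisfy η = Λ/λ. -/
theorem stmt_8 {E : Type*} [NormedAddCommGroup E] [InnerProductSpace ℝ E]
    (V W : E) (hV : ‖V‖ < 1) (hVW : ‖V + W‖ < 1)
    (lam Lam alphaW2 betaW eta : ℝ)
    (hlam : lam = 1 - ‖V‖ ^ 2) (hLam : Lam = 1 - ‖V + W‖ ^ 2)
    (halpha : alphaW2 = ‖W‖ ^ 2 / lam + (inner ℝ V W : ℝ) ^ 2 / lam ^ 2)
    (hbeta : betaW = -(inner ℝ V W : ℝ) / lam)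
    (heta : eta = (1 + betaW) ^ 2 - alphaW2) :
    eta = Lam / lam :=
  stmt_8_general V W hV lam Lam alphaW2 betaW eta hlam hLam halpha hbeta heta
end
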